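/- If G is a finite simple graph with at least one edge whose girth is at least 4 (G contains no cycle of length 3), then G is not a universal fixer; that is, there exists a permutation π of V(G) with γ(πG) > γ(G). -/

import Mathlib

open SimpleGraph

variable {V : Type*}

/-- `D` is a dominating set of `G`: every vertex is in `D` or adjacent to a vertex of `D`. -/
def IsDomSet (G : SimpleGraph V) (D : Set V) : Prop :=
  ∀ v : V, ∃ d ∈ D, d = v ∨ G.Adj d v

/-- The domination number of `G`: minimum cardinality of a dominating set. -/
noncomputable def domNum (G : SimpleGraph V) : ℕ :=
  sInf {n | ∃ D : Set V, IsDomSet G D ∧ D.ncard = n}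

/-- The prism `πG` of `G`: two disjoint copies of `G` together with the matching
`{u (π u) : u ∈ V(G)}`, the second copy playing the role of `G'`. -/
def prism (G : SimpleGraph V) (π : Equiv.Perm V) : SimpleGraph (V ⊕ V) where
  Adj a b :=
    match a, b with
    | Sum.inl u, Sum.inl v => G.Adj u v
    | Sum.inr u, Sum.inr v => G.Adj u v
    | Sum.inl u, Sum.inr v => π u = v
    | Sum.inr u, Sum.inl v => π v = u
  symm := ⟨by
    rintro (u | u) (v | v) h
    · exact G.adj_symm h
    · exact h
    · exact h
    · exact G.adj_symm h⟩
  loopless := ⟨by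
    rintro (u | u) h
    · exact G.irrefl h
    · exact G.irrefl h⟩

/-- The closed neighborhood `N[v]` of a vertex. -/
def closedNbhd (G : SimpleGraph V) (v : V) : Set V :=
  insert v (G.neighborSet v)

/-- `x` is a `C₃`-free vertex: non-isolated and belonging to no triangle of `G`. -/
def C3Free (G : SimpleGraph V) (x : V) : Prop :=
  (∃ y, G.Adj x y) ∧ ∀ u v : V, G.Adj x u → G.Adj x v → ¬ G.Adj u v

/-- `A = A1 ∪ A2` is a separable γ-set of `G` (an `A1`-γ-set): `A1, A2` are nonempty,
disjoint, `A` is a γ-set, and `A1` dominates `V(G) - A`. -/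
def SepGammaSet (G : SimpleGraph V) (A1 A2 : Set V) : Prop :=
  A1.Nonempty ∧ A2.Nonempty ∧ Disjoint A1 A2 ∧
  IsDomSet G (A1 ∪ A2) ∧ (A1 ∪ A2).ncard = domNum G ∧
  ∀ v ∉ A1 ∪ A2, ∃ u ∈ A1, G.Adj u v

/-- The separable γ-set `A = A1 ∪ A2` is effective under `π`: `π(A)` is a γ-set of the
copy `G'` of `G` (identified with `G`) whose dominating part is `B2' = π(A2)`,
i.e. `π(A2)` dominates `V(G') - π(A)`. -/
def Effective (G : SimpleGraph V) (π : Equiv.Perm V) (A1 A2 : Set V) : Prop :=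
  IsDomSet G (⇑π '' (A1 ∪ A2)) ∧ (⇑π '' (A1 ∪ A2)).ncard = domNum G ∧
  ∀ v ∉ ⇑π '' (A1 ∪ A2), ∃ u ∈ ⇑π '' A2, G.Adj u v

/-- The star `K_{1,m}` on `Fin (m+1)`, with center `0` adjacent to the `m` leaves. -/
def starGraph (m : ℕ) : SimpleGraph (Fin (m + 1)) where
  Adj a b := (a = 0 ∧ b ≠ 0) ∨ (b = 0 ∧ a ≠ 0)
  symm := ⟨fun a b h => Or.symm h⟩
  loopless := ⟨fun a h => by rcases h with ⟨h1, h2⟩ | ⟨h1, h2⟩ <;> exact h2 h1⟩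

/-!
Let `x` be a vertex with a neighbour and let `π` cyclically permute the closed neighbourhood
`N[x]`, fixing every other vertex. If `γ(πG) ≤ γ(G)`, a minimum dominating set of the prism yields
a separable γ-set `A = A₁ ∪ A₂` of `G` effective under `π`. Minimality forbids any vertex of `A₂`
to have a neighbour in `A`, and any vertex of `π(A₁)` to have a neighbour in `π(A)`. Whether `x`
lies in `A₁`, in `A₂` or outside `A`, such a forbidden adjacency appears: since `G` is
triangle-free, a neighbour of a vertex of `N(x)` is either `x` or lies outside `N[x]`, where `π`
is the identity.
-/

open Equiv

theorem Set.ncard_preimage_inl_add_ncard_preimage_inr {α β : Type*} [Finite α] [Finite β]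
    (s : Set (α ⊕ β)) : (Sum.inl ⁻¹' s).ncard + (Sum.inr ⁻¹' s).ncard = s.ncard := by
  conv_rhs => rw [← Set.image_preimage_inl_union_image_preimage_inr s]
  rw [Set.ncard_union_eq Set.disjoint_image_inl_image_inr,
    Set.ncard_image_of_injective _ Sum.inl_injective,
    Set.ncard_image_of_injective _ Sum.inr_injective]

theorem Equiv.Perm.IsCycleOn.exists_mem_notMem_image {α : Type*} {f : Perm α} {s t : Set α}
    (hs : s.Finite) (hf : f.IsCycleOn s) {a c : α} (ha : a ∈ s ∩ t) (hc : c ∈ s \ t) :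
    ∃ b ∈ s ∩ t, b ∉ f '' t := by
  by_contra! h
  have hstep : ∀ b ∈ s ∩ t, f⁻¹ b ∈ s ∩ t := by
    intro b hb
    obtain ⟨a, ha, rfl⟩ := h b hb
    exact ⟨hf.inv.apply_mem_iff.2 hb.1, by simpa using ha⟩
  have hpow : ∀ n : ℕ, (f⁻¹ ^ n) a ∈ s ∩ t := by
    intro n
    induction n with
    | zero => simpa using ha
    | succ n ih => rw [pow_succ', Perm.mul_apply]; exact hstep _ ih
  obtain ⟨n, hn⟩ := hf.inv.exists_pow_eq' hs ha.1 hc.1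
  exact hc.2 (hn ▸ hpow n).2

theorem Equiv.Perm.mem_of_mem_image_of_notMem {α : Type*} {σ : Perm α} {s S : Set α}
    (hfix : ∀ v ∉ s, σ v = v) {v : α} (hv : v ∉ s) (hvS : v ∈ σ '' S) : v ∈ S := by
  obtain ⟨a, ha, rfl⟩ := hvS
  rwa [σ.injective (hfix _ hv)]

section Domination

variable {G : SimpleGraph V}

theorem domNum_le_ncard {D : Set V} (h : IsDomSet G D) : domNum G ≤ D.ncard :=
  Nat.sInf_le ⟨D, h, rfl⟩

theorem exists_isDomSet_ncard_eq_domNum (G : SimpleGraph V) :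
    ∃ D : Set V, IsDomSet G D ∧ D.ncard = domNum G :=
  Nat.sInf_mem (s := {n | ∃ D : Set V, IsDomSet G D ∧ D.ncard = n})
    ⟨_, Set.univ, fun v => ⟨v, Set.mem_univ v, .inl rfl⟩, rfl⟩

theorem isDomSet_of_forall_mem_or_exists_adj {A B : Set V} (hBA : B ⊆ A)
    (h : ∀ v, v ∈ A ∨ ∃ u ∈ B, G.Adj u v) : IsDomSet G A := by
  intro v
  rcases h v with hv | ⟨u, hu, huv⟩
  · exact ⟨v, hv, .inl rfl⟩
  · exact ⟨u, hBA hu, .inr huv⟩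

theorem not_adj_of_ncard_le_domNum [Finite V] {A A₁ : Set V} (hA : A.ncard ≤ domNum G)
    (hA₁A : A₁ ⊆ A) (hA₁ : ∀ v ∉ A, ∃ u ∈ A₁, G.Adj u v) {a b : V} (ha : a ∈ A) (ha₁ : a ∉ A₁)
    (hb : b ∈ A) : ¬ G.Adj b a := by
  intro hba
  -- otherwise `A \ {a}` would be a smaller dominating set
  have hdom : IsDomSet G (A \ {a}) := by
    intro v
    by_cases hvA : v ∈ A
    · by_cases hva : v = a
      · subst hva
        exact ⟨b, ⟨hb, hba.ne⟩, .inr hba⟩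
      · exact ⟨v, ⟨hvA, hva⟩, .inl rfl⟩
    · obtain ⟨u, hu, huv⟩ := hA₁ v hvA
      exact ⟨u, ⟨hA₁A hu, fun h => ha₁ (h ▸ hu)⟩, .inr huv⟩
  have := domNum_le_ncard hdom
  have := Set.ncard_sdiff_singleton_add_one ha (Set.toFinite A)
  omega

theorem nonempty_of_ncard_le_domNum [Finite V] (hG : ∃ u v, G.Adj u v) {A A₁ : Set V}
    (hA : A.ncard ≤ domNum G) (hA₁A : A₁ ⊆ A) (hA₁ : ∀ v ∉ A, ∃ u ∈ A₁, G.Adj u v) :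
    A₁.Nonempty := by
  by_contra hA₁e
  obtain ⟨u, v, huv⟩ := hG
  have hall : ∀ w, w ∈ A := fun w =>
    of_not_not fun hw => hA₁e (let ⟨z, hz, _⟩ := hA₁ w hw; ⟨z, hz⟩)
  exact not_adj_of_ncard_le_domNum hA hA₁A hA₁ (hall v) (fun hv => hA₁e ⟨v, hv⟩) (hall u) huv

end Domination

section Prism

variable {G : SimpleGraph V} {π : Perm V} {D : Set (V ⊕ V)}

theorem IsDomSet.prism_inl (hD : IsDomSet (prism G π) D) (v : V) :
    v ∈ Sum.inl ⁻¹' D ∪ π ⁻¹' (Sum.inr ⁻¹' D) ∨ ∃ u ∈ Sum.inl ⁻¹' D, G.Adj u v := by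
  obtain ⟨u | u, hu, h | h⟩ := hD (Sum.inl v)
  · exact .inl (.inl (Sum.inl_injective h ▸ hu))
  · exact .inr ⟨u, hu, h⟩
  · cases h
  · exact .inl (.inr (show Sum.inr (π v) ∈ D from (show π v = u from h) ▸ hu))

theorem IsDomSet.prism_inr (hD : IsDomSet (prism G π) D) (w : V) :
    w ∈ π '' (Sum.inl ⁻¹' D) ∪ Sum.inr ⁻¹' D ∨ ∃ u ∈ Sum.inr ⁻¹' D, G.Adj u w := by
  obtain ⟨u | u, hu, h | h⟩ := hD (Sum.inr w)
  · cases h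
  · exact .inl (.inl ⟨u, hu, h⟩)
  · exact .inl (.inr (Sum.inr_injective h ▸ hu))
  · exact .inr ⟨u, hu, h⟩

end Prism

section SeparableGammaSet

variable {G : SimpleGraph V} {π : Perm V} {A₁ A₂ : Set V}

namespace SepGammaSet

theorem disjoint (h : SepGammaSet G A₁ A₂) : Disjoint A₁ A₂ := h.2.2.1

theorem isDomSet (h : SepGammaSet G A₁ A₂) : IsDomSet G (A₁ ∪ A₂) := h.2.2.2.1

theorem exists_adj_of_notMem (h : SepGammaSet G A₁ A₂) {v : V} (hv : v ∉ A₁ ∪ A₂) :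
    ∃ u ∈ A₁, G.Adj u v :=
  h.2.2.2.2.2 v hv

theorem not_adj [Finite V] (h : SepGammaSet G A₁ A₂) {a b : V} (ha : a ∈ A₂) (hb : b ∈ A₁ ∪ A₂) :
    ¬ G.Adj b a :=
  not_adj_of_ncard_le_domNum h.2.2.2.2.1.le Set.subset_union_left h.2.2.2.2.2 (.inr ha)
    (Set.disjoint_right.1 h.disjoint ha) hb

theorem image_of_effective (h : SepGammaSet G A₁ A₂) (he : Effective G π A₁ A₂) :
    SepGammaSet G (π '' A₂) (π '' A₁) := by
  obtain ⟨hdom, hcard, hA₂⟩ := he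
  rw [Set.image_union, Set.union_comm] at hdom hcard hA₂
  exact ⟨h.2.1.image π, h.1.image π, (Set.disjoint_image_iff π.injective).2 h.disjoint.symm,
    hdom, hcard, hA₂⟩

end SepGammaSet

/-- `A₁` and `π(A₂)` are the traces of a minimum dominating set of the prism on the two copies
of `G`. -/
theorem exists_sepGammaSet_effective [Finite V] (hG : ∃ u v, G.Adj u v)
    (hπ : domNum (prism G π) ≤ domNum G) :
    ∃ A₁ A₂, SepGammaSet G A₁ A₂ ∧ Effective G π A₁ A₂ := by
  obtain ⟨D, hD, hDcard⟩ := exists_isDomSet_ncard_eq_domNum (prism G π)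
  set A₁ := Sum.inl ⁻¹' D
  set A₂ := π ⁻¹' (Sum.inr ⁻¹' D)
  have himage : π '' A₂ = Sum.inr ⁻¹' D := π.image_preimage _
  have hdom₁ : ∀ v, v ∈ A₁ ∪ A₂ ∨ ∃ u ∈ A₁, G.Adj u v := hD.prism_inl
  have hdom₂ : ∀ w, w ∈ π '' (A₁ ∪ A₂) ∨ ∃ u ∈ π '' A₂, G.Adj u w := by
    rw [Set.image_union, himage]
    exact hD.prism_inr
  have hsum : A₁.ncard + A₂.ncard ≤ domNum G := by
    rw [← Set.ncard_image_of_injective A₂ π.injective, himage,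
      Set.ncard_preimage_inl_add_ncard_preimage_inr, hDcard]
    exact hπ
  have hA : IsDomSet G (A₁ ∪ A₂) :=
    isDomSet_of_forall_mem_or_exists_adj Set.subset_union_left hdom₁
  have hA' : IsDomSet G (π '' (A₁ ∪ A₂)) :=
    isDomSet_of_forall_mem_or_exists_adj (Set.image_mono Set.subset_union_right) hdom₂
  have hunion := Set.ncard_union_le A₁ A₂
  have hAcard : (A₁ ∪ A₂).ncard = domNum G := by
    have := domNum_le_ncard hA
    omega
  have hA'card : (π '' (A₁ ∪ A₂)).ncard = domNum G := by
    rw [Set.ncard_image_of_injective _ π.injective, hAcard]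
  have hdisj : Disjoint A₁ A₂ := (Set.ncard_union_eq_iff).1 (by omega)
  have hcompl₁ : ∀ v ∉ A₁ ∪ A₂, ∃ u ∈ A₁, G.Adj u v := fun v hv => (hdom₁ v).resolve_left hv
  have hcompl₂ : ∀ w ∉ π '' (A₁ ∪ A₂), ∃ u ∈ π '' A₂, G.Adj u w := fun w hw =>
    (hdom₂ w).resolve_left hw
  have hA₁ : A₁.Nonempty :=
    nonempty_of_ncard_le_domNum hG hAcard.le Set.subset_union_left hcompl₁
  have hA₂ : A₂.Nonempty := Set.image_nonempty.1 <|
    nonempty_of_ncard_le_domNum hG hA'card.le (Set.image_mono Set.subset_union_right) hcompl₂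
  exact ⟨A₁, A₂, ⟨hA₁, hA₂, hdisj, hA, hAcard, hcompl₁⟩, ⟨hA', hA'card, hcompl₂⟩⟩

end SeparableGammaSet

section ClosedNbhd

variable {G : SimpleGraph V} {x v : V}

theorem mem_closedNbhd_iff : v ∈ closedNbhd G x ↔ v = x ∨ G.Adj x v := Iff.rfl

theorem self_mem_closedNbhd : x ∈ closedNbhd G x := Set.mem_insert x _

theorem mem_closedNbhd_of_adj (h : G.Adj x v) : v ∈ closedNbhd G x := Set.mem_insert_of_mem x h

theorem adj_of_mem_closedNbhd (hv : v ∈ closedNbhd G x) (hvx : v ≠ x) : G.Adj x v :=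
  (mem_closedNbhd_iff.1 hv).resolve_left hvx

theorem eq_or_notMem_closedNbhd_of_adj (htri : ∀ u v w, G.Adj u v → G.Adj v w → ¬ G.Adj u w)
    {u y : V} (hy : y ∈ closedNbhd G x) (hyx : y ≠ x) (huy : G.Adj u y) :
    u = x ∨ u ∉ closedNbhd G x := by
  by_contra! h
  exact htri x u y (adj_of_mem_closedNbhd h.2 h.1) huy (adj_of_mem_closedNbhd hy hyx)

end ClosedNbhd

namespace SepGammaSet

variable {G : SimpleGraph V} {x : V} {σ : Perm V} {A₁ A₂ : Set V}

theorem not_effective_of_mem_left [Finite V] (hA : SepGammaSet G A₁ A₂)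
    (hσ : σ.IsCycleOn (closedNbhd G x)) (hσx : σ x ≠ x) (hx : x ∈ A₁) :
    ¬ Effective G σ A₁ A₂ := by
  intro he
  have hA₂ : ∀ v ∈ closedNbhd G x, v ∉ A₂ := by
    intro v hv hvA₂
    rcases mem_closedNbhd_iff.1 hv with rfl | hxv
    · exact Set.disjoint_left.1 hA.disjoint hx hvA₂
    · exact hA.not_adj hvA₂ (.inl hx) hxv
  have hσA₂ : ∀ w ∈ closedNbhd G x, w ∉ σ '' A₂ := by
    rintro w hw ⟨a, ha, rfl⟩
    exact hA₂ a (hσ.apply_mem_iff.1 hw) ha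
  have hxσA₁ : x ∈ σ '' A₁ := by
    by_contra hx'
    have hxA' : x ∉ σ '' (A₁ ∪ A₂) := by
      rw [Set.image_union]
      rintro (h | h)
      exacts [hx' h, hσA₂ x self_mem_closedNbhd h]
    obtain ⟨u, hu, hux⟩ := he.2.2 x hxA'
    exact hσA₂ u (mem_closedNbhd_of_adj hux.symm) hu
  have hxσx : G.Adj x (σ x) := adj_of_mem_closedNbhd (hσ.apply_mem_iff.2 self_mem_closedNbhd) hσx
  exact (hA.image_of_effective he).not_adj hxσA₁ (.inr ⟨x, hx, rfl⟩) hxσx.symm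

theorem not_effective_of_mem_right [Finite V] (hA : SepGammaSet G A₁ A₂)
    (htri : ∀ u v w, G.Adj u v → G.Adj v w → ¬ G.Adj u w) (hσ : σ.IsCycleOn (closedNbhd G x))
    (hfix : ∀ v ∉ closedNbhd G x, σ v = v) (hσx : σ x ≠ x) (hx : x ∈ A₂) :
    ¬ Effective G σ A₁ A₂ := by
  intro he
  have hσxN : σ x ∈ closedNbhd G x := hσ.apply_mem_iff.2 self_mem_closedNbhd
  have hσxA : σ x ∉ A₁ ∪ A₂ := fun h => hA.not_adj hx h (adj_of_mem_closedNbhd hσxN hσx).symm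
  obtain ⟨u, hu, huσx⟩ := hA.exists_adj_of_notMem hσxA
  have huN : u ∉ closedNbhd G x :=
    (eq_or_notMem_closedNbhd_of_adj htri hσxN hσx huσx).resolve_left
      (by rintro rfl; exact Set.disjoint_left.1 hA.disjoint hu hx)
  exact (hA.image_of_effective he).not_adj ⟨u, hu, hfix u huN⟩ (.inl ⟨x, hx, rfl⟩) huσx.symm

theorem not_effective_of_notMem [Finite V] (hA : SepGammaSet G A₁ A₂)
    (htri : ∀ u v w, G.Adj u v → G.Adj v w → ¬ G.Adj u w) (hσ : σ.IsCycleOn (closedNbhd G x))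
    (hfix : ∀ v ∉ closedNbhd G x, σ v = v) (hx : x ∉ A₁ ∪ A₂) :
    ¬ Effective G σ A₁ A₂ := by
  intro he
  obtain ⟨d, hdA, hdx⟩ := hA.isDomSet x
  have hdN : d ∈ closedNbhd G x :=
    mem_closedNbhd_of_adj (hdx.resolve_left (by rintro rfl; exact hx hdA)).symm
  obtain ⟨b, ⟨hbN, hbA⟩, hbA'⟩ :=
    hσ.exists_mem_notMem_image (Set.toFinite _) ⟨hdN, hdA⟩ ⟨self_mem_closedNbhd, hx⟩
  have hbx : b ≠ x := by rintro rfl; exact hx hbA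
  obtain ⟨u, huA₂, hub⟩ := he.2.2 b hbA'
  rcases eq_or_notMem_closedNbhd_of_adj htri hbN hbx hub with hux | huN
  · rw [hux] at huA₂
    obtain ⟨v, hv, hvx⟩ := hA.exists_adj_of_notMem hx
    have hσv : σ v ≠ x := by
      intro hσv
      obtain ⟨a, ha, hax⟩ := huA₂
      exact Set.disjoint_left.1 hA.disjoint hv (σ.injective (hσv.trans hax.symm) ▸ ha)
    have hσvN : σ v ∈ closedNbhd G x := hσ.apply_mem_iff.2 (mem_closedNbhd_of_adj hvx.symm)
    exact (hA.image_of_effective he).not_adj ⟨v, hv, rfl⟩ (.inl huA₂)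
      (adj_of_mem_closedNbhd hσvN hσv)
  · exact hA.not_adj (Perm.mem_of_mem_image_of_notMem hfix huN huA₂) hbA hub.symm

end SepGammaSet

theorem exists_perm_forall_sepGammaSet_not_effective [Finite V] {G : SimpleGraph V}
    (htri : ∀ u v w, G.Adj u v → G.Adj v w → ¬ G.Adj u w) {x y : V} (hxy : G.Adj x y) :
    ∃ σ : Perm V, ∀ A₁ A₂, SepGammaSet G A₁ A₂ → ¬ Effective G σ A₁ A₂ := by
  obtain ⟨σ, hσ, hsupp⟩ := (Set.to_countable (closedNbhd G x)).exists_cycleOn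
  have hfix : ∀ v ∉ closedNbhd G x, σ v = v := fun v hv => of_not_not fun h => hv (hsupp h)
  have hσx : σ x ≠ x := hσ.apply_ne (Set.nontrivial_of_mem_mem_ne self_mem_closedNbhd
    (mem_closedNbhd_of_adj hxy) hxy.ne) self_mem_closedNbhd
  refine ⟨σ, fun A₁ A₂ hA => ?_⟩
  by_cases hx₁ : x ∈ A₁
  · exact hA.not_effective_of_mem_left hσ hσx hx₁
  by_cases hx₂ : x ∈ A₂
  · exact hA.not_effective_of_mem_right htri hσ hfix hσx hx₂
  exact hA.not_effective_of_notMem htri hσ hfix (by rintro (h | h) <;> contradiction)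

/-- a graph with at least one edge and girth at least 4 (no triangle) is not
a universal fixer. -/
theorem not_universal_fixer_of_girth_ge_four [Fintype V] (G : SimpleGraph V)
    (hedge : ∃ u v : V, G.Adj u v)
    (htriangleFree : ∀ u v w : V, G.Adj u v → G.Adj v w → ¬ G.Adj u w) :
    ∃ π : Equiv.Perm V, domNum G < domNum (prism G π) := by
  obtain ⟨x, y, hxy⟩ := hedge
  obtain ⟨π, hπ⟩ := exists_perm_forall_sepGammaSet_not_effective htriangleFree hxy
  refine ⟨π, lt_of_not_ge fun hle => ?_⟩
  obtain ⟨A₁, A₂, hA, he⟩ := exists_sepGammaSet_effective ⟨x, y, hxy⟩ hle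
  exact hπ A₁ A₂ hA he
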